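/- arXiv:2310.05540 — 4 statements merged into one kernel-verified Lean document; each statement's English description precedes it below -/
import Mathlib

section
/- Let T be a monic irreducible polynomial over F_{p^2}. Then for every n ≥ 1, σ**(T^{2n}) = (1 + T^{n+1})·σ(T^{n−1}), and for every n ≥ 0, σ**(T^{2n+1}) = σ(T^{2n+1}). -/
open Polynomial

variable {F : Type*} [Field F]

/-- `D` is a (monic) unitary divisor of `S`: `D ∣ S` and `gcd(D, S/D) = 1`. -/
def IsUnitaryDivisor (D S : Polynomial F) : Prop :=
  D.Monic ∧ D ∣ S ∧ IsCoprime D (S / D)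

/-- `D` is a (monic) bi-unitary divisor of `S`: `gcd_u(D, S/D) = 1`, i.e. the only common
monic unitary divisor of `D` and `S/D` is `1`. -/
def IsBiunitaryDivisor (D S : Polynomial F) : Prop :=
  D.Monic ∧ D ∣ S ∧
    ∀ G : Polynomial F, IsUnitaryDivisor G D → IsUnitaryDivisor G (S / D) → G = 1

/-- `σ(S)`: the sum of all monic divisors of `S`. -/
noncomputable def sigma' (S : Polynomial F) : Polynomial F :=
  ∑ᶠ D ∈ {D : Polynomial F | D.Monic ∧ D ∣ S}, D

/-- `σ**(S)`: the sum of all monic bi-unitary divisors of `S`. -/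
noncomputable def sigmaStarStar (S : Polynomial F) : Polynomial F :=
  ∑ᶠ D ∈ {D : Polynomial F | IsBiunitaryDivisor D S}, D

/-- `S` is bi-unitary perfect: `σ**(S) = S`. -/
def IsBUP (S : Polynomial F) : Prop := sigmaStarStar S = S

lemma pow_inj_aux {T : Polynomial F} (hirr : Irreducible T) :
    Function.Injective (fun i : ℕ => T ^ i) := by
  intro i j h
  have hd : 0 < T.natDegree := hirr.natDegree_pos
  have h2 := congrArg Polynomial.natDegree h
  simp only [Polynomial.natDegree_pow] at h2
  exact Nat.eq_of_mul_eq_mul_right hd h2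

lemma div_pow_aux {T : Polynomial F} (hmonic : T.Monic) {i m : ℕ} (him : i ≤ m) :
    T ^ m / T ^ i = T ^ (m - i) := by
  have h : T ^ m = T ^ i * T ^ (m - i) := by
    rw [← pow_add, Nat.add_sub_cancel' him]
  rw [h, mul_div_cancel_left₀ _ (pow_ne_zero _ hmonic.ne_zero)]

lemma dvd_char_aux {T : Polynomial F} (hmonic : T.Monic) (hirr : Irreducible T)
    (m : ℕ) {D : Polynomial F} (hDm : D.Monic) (hDd : D ∣ T ^ m) :
    ∃ i ≤ m, D = T ^ i := by
  obtain ⟨i, him, hassoc⟩ := (dvd_prime_pow hirr.prime m).mp hDd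
  exact ⟨i, him, Polynomial.eq_of_monic_of_associated hDm (hmonic.pow i) hassoc⟩

lemma unitary_char_aux {T : Polynomial F} (hmonic : T.Monic) (hirr : Irreducible T)
    (k : ℕ) (G : Polynomial F) :
    IsUnitaryDivisor G (T ^ k) ↔ G = 1 ∨ G = T ^ k := by
  constructor
  · rintro ⟨hGm, hGd, hcop⟩
    obtain ⟨i, hik, rfl⟩ := dvd_char_aux hmonic hirr k hGm hGd
    rcases Nat.eq_zero_or_pos i with hi0 | hi0
    · left; simp [hi0]
    rcases eq_or_lt_of_le hik with hik' | hik'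
    · right; rw [hik']
    exfalso
    rw [div_pow_aux hmonic hik] at hcop
    have hT1 : T ∣ T ^ i := dvd_pow_self T hi0.ne'
    have hT2 : T ∣ T ^ (k - i) := dvd_pow_self T (Nat.sub_ne_zero_of_lt hik')
    exact hirr.not_isUnit (hcop.isUnit_of_dvd' hT1 hT2)
  · rintro (rfl | rfl)
    · exact ⟨monic_one, one_dvd _, by simpa using isCoprime_one_left⟩
    · refine ⟨hmonic.pow k, dvd_rfl, ?_⟩
      rw [div_pow_aux hmonic le_rfl, Nat.sub_self, pow_zero]
      exact isCoprime_one_right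

lemma sigma'_pow_aux {T : Polynomial F} (hmonic : T.Monic) (hirr : Irreducible T)
    (m : ℕ) : sigma' (T ^ m) = ∑ i ∈ Finset.range (m + 1), T ^ i := by
  classical
  have hset : {D : Polynomial F | D.Monic ∧ D ∣ T ^ m} =
      ↑((Finset.range (m + 1)).image (T ^ ·)) := by
    ext D
    simp only [Set.mem_setOf_eq, Finset.coe_image, Set.mem_image, Finset.mem_coe,
      Finset.mem_range, Nat.lt_succ_iff]
    constructor
    · rintro ⟨hDm, hDd⟩
      obtain ⟨i, him, rfl⟩ := dvd_char_aux hmonic hirr m hDm hDd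
      exact ⟨i, him, rfl⟩
    · rintro ⟨i, him, rfl⟩
      exact ⟨hmonic.pow i, pow_dvd_pow _ him⟩
  rw [sigma', hset, finsum_mem_coe_finset, Finset.sum_image]
  intro x _ y _ h
  exact pow_inj_aux hirr h

lemma sigmaStarStar_pow_aux {T : Polynomial F} (hmonic : T.Monic) (hirr : Irreducible T)
    (m : ℕ) :
    sigmaStarStar (T ^ m) =
      ∑ i ∈ (Finset.range (m + 1)).filter (fun i => i = 0 ∨ 2 * i ≠ m), T ^ i := by
  classical
  have hset : {D : Polynomial F | IsBiunitaryDivisor D (T ^ m)} =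
      ↑(((Finset.range (m + 1)).filter (fun i => i = 0 ∨ 2 * i ≠ m)).image (T ^ ·)) := by
    ext D
    simp only [Set.mem_setOf_eq, Finset.coe_image, Set.mem_image, Finset.mem_coe,
      Finset.mem_filter, Finset.mem_range, Nat.lt_succ_iff]
    constructor
    · rintro ⟨hDm, hDd, hbi⟩
      obtain ⟨i, him, rfl⟩ := dvd_char_aux hmonic hirr m hDm hDd
      refine ⟨i, ⟨him, ?_⟩, rfl⟩
      by_contra h
      push_neg at h
      obtain ⟨hi0, h2i⟩ := h
      have hmi : m - i = i := by omega
      have h1 : T ^ i = 1 := by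
        apply hbi
        · exact (unitary_char_aux hmonic hirr i _).mpr (Or.inr rfl)
        · rw [div_pow_aux hmonic him, hmi]
          exact (unitary_char_aux hmonic hirr i _).mpr (Or.inr rfl)
      have := pow_inj_aux hirr (by simpa using h1 : T ^ i = T ^ 0)
      exact hi0 this
    · rintro ⟨i, ⟨him, hcond⟩, rfl⟩
      refine ⟨hmonic.pow i, pow_dvd_pow _ him, ?_⟩
      intro G hG1 hG2
      rw [unitary_char_aux hmonic hirr] at hG1
      rw [div_pow_aux hmonic him, unitary_char_aux hmonic hirr] at hG2
      rcases hG1 with rfl | rfl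
      · rfl
      rcases hG2 with h1 | h2
      · exact h1
      · have heq : i = m - i := pow_inj_aux hirr h2
        rcases hcond with hi0 | h2i
        · simp [hi0]
        · exfalso; omega
  rw [sigmaStarStar, hset, finsum_mem_coe_finset, Finset.sum_image]
  intro x _ y _ h
  exact pow_inj_aux hirr h

theorem stmt1 (p : ℕ) [Fact p.Prime] (T : Polynomial (GaloisField p 2))
    (hmonic : T.Monic) (hirr : Irreducible T) :
    (∀ n : ℕ, 1 ≤ n →
      sigmaStarStar (T ^ (2 * n)) = (1 + T ^ (n + 1)) * sigma' (T ^ (n - 1))) ∧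
    (∀ n : ℕ, sigmaStarStar (T ^ (2 * n + 1)) = sigma' (T ^ (2 * n + 1))) := by
  have hT1 : T - 1 ≠ 0 := by
    intro h
    have hT : T = 1 := by linear_combination h
    exact hirr.not_isUnit (hT ▸ isUnit_one)
  constructor
  · intro n hn
    rw [sigmaStarStar_pow_aux hmonic hirr, sigma'_pow_aux hmonic hirr]
    have hfilter : (Finset.range (2 * n + 1)).filter (fun i => i = 0 ∨ 2 * i ≠ 2 * n) =
        (Finset.range (2 * n + 1)).erase n := by
      ext i
      simp only [Finset.mem_filter, Finset.mem_range, Finset.mem_erase]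
      omega
    rw [hfilter]
    have hn1 : n - 1 + 1 = n := by omega
    rw [hn1]
    apply mul_right_cancel₀ hT1
    have herase : ∑ i ∈ (Finset.range (2 * n + 1)).erase n, T ^ i =
        (∑ i ∈ Finset.range (2 * n + 1), T ^ i) - T ^ n := by
      rw [eq_sub_iff_add_eq, Finset.sum_erase_add]
      exact Finset.mem_range.mpr (by omega)
    rw [herase, sub_mul, mul_assoc, geom_sum_mul, geom_sum_mul]
    have h1 : T ^ (2 * n + 1) = T ^ (n + 1) * T ^ n := by
      rw [← pow_add]; ring_nf
    rw [h1]
    ring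
  · intro n
    rw [sigmaStarStar_pow_aux hmonic hirr, sigma'_pow_aux hmonic hirr]
    congr 1
    apply Finset.filter_true_of_mem
    intro i _
    omega
end

section
/- Over F_4, σ**(x^{2k+1}) splits (is a product of linear factors) if and only if 2k+1 = N·2^n − 1 for some N ∈ {1,3} and some n ∈ ℕ. -/
open Polynomial

variable {F : Type*} [Field F]

/-- The field with four elements. -/
abbrev F4 := GaloisField 2 2

/-!
For odd `e` every monic divisor `X ^ d` of `X ^ e` is bi-unitary: the only unitary divisors of
`X ^ d` and `X ^ (e - d)` are `1` and the polynomial itself, and `X ^ d ≠ X ^ (e - d)` as `e` is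
odd. Hence `σ**(X ^ e) = 1 + X + ⋯ + X ^ e`, which splits iff
`X ^ (e + 1) - 1 = (X - 1) σ**(X ^ e)` does. Writing `e + 1 = m 2 ^ n` with `m` odd, Frobenius
gives `X ^ (e + 1) - 1 = (X ^ m - 1) ^ 2 ^ n`, and the separable `X ^ m - 1` splits over a
finite field `K` iff its `m` roots form a subgroup of the cyclic group `Kˣ`, i.e. iff
`m ∣ |K| - 1`, which is `3` for `K = 𝔽₄`.
-/

section BiunitaryDivisorsOfXPow

lemma eq_X_pow_of_monic_of_dvd_X_pow {D : F[X]} {e : ℕ} (hD : D.Monic) (hdvd : D ∣ X ^ e) :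
    ∃ d ≤ e, D = X ^ d := by
  obtain ⟨d, hde, hassoc⟩ := (dvd_prime_pow prime_X e).mp hdvd
  exact ⟨d, hde, eq_of_monic_of_associated hD (monic_X_pow d) hassoc⟩

lemma X_pow_div_X_pow {d e : ℕ} (h : d ≤ e) : (X ^ e / X ^ d : F[X]) = X ^ (e - d) := by
  rw [← Nat.add_sub_cancel' h, pow_add, Nat.add_sub_cancel_left,
    mul_div_cancel_left₀ _ (pow_ne_zero _ X_ne_zero)]

lemma X_pow_injective : Function.Injective ((X : F[X]) ^ ·) :=
  pow_injective_of_not_isUnit not_isUnit_X X_ne_zero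

lemma IsUnitaryDivisor.eq_one_or_eq_X_pow {G : F[X]} {e : ℕ} (h : IsUnitaryDivisor G (X ^ e)) :
    G = 1 ∨ G = X ^ e := by
  obtain ⟨hG, hdvd, hcop⟩ := h
  obtain ⟨d, hde, rfl⟩ := eq_X_pow_of_monic_of_dvd_X_pow hG hdvd
  rw [X_pow_div_X_pow hde] at hcop
  by_cases hd : d = 0
  · simp [hd]
  by_cases hed : e - d = 0
  · right; rw [Nat.le_antisymm hde (Nat.sub_eq_zero_iff_le.mp hed)]
  exact absurd (hcop.isUnit_of_dvd' (dvd_pow_self X hd) (dvd_pow_self X hed)) not_isUnit_X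

lemma isBiunitaryDivisor_X_pow_iff {e : ℕ} (he : Odd e) {D : F[X]} :
    IsBiunitaryDivisor D (X ^ e) ↔ ∃ d ≤ e, D = X ^ d := by
  refine ⟨fun ⟨hD, hdvd, _⟩ ↦ eq_X_pow_of_monic_of_dvd_X_pow hD hdvd, ?_⟩
  rintro ⟨d, hde, rfl⟩
  refine ⟨monic_X_pow d, pow_dvd_pow X hde, fun G hG hG' ↦ ?_⟩
  rw [X_pow_div_X_pow hde] at hG'
  rcases hG.eq_one_or_eq_X_pow with rfl | rfl
  · rfl
  rcases hG'.eq_one_or_eq_X_pow with h | h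
  · exact h
  have : d = e - d := X_pow_injective h
  have : d = 0 := by rcases he with ⟨k, rfl⟩; omega
  simp [this]

lemma sigmaStarStar_X_pow {e : ℕ} (he : Odd e) :
    sigmaStarStar (X ^ e : F[X]) = ∑ d ∈ Finset.range (e + 1), X ^ d := by
  classical
  have hset : {D : F[X] | IsBiunitaryDivisor D (X ^ e)} =
      (((Finset.range (e + 1)).image (X ^ ·) : Finset F[X]) : Set F[X]) := by
    ext D
    simp [isBiunitaryDivisor_X_pow_iff he, eq_comm]
  rw [sigmaStarStar, hset, finsum_mem_coe_finset,
    Finset.sum_image fun _ _ _ _ h ↦ X_pow_injective h]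

end BiunitaryDivisorsOfXPow

section Splitting

variable {K : Type*} [Field K]

lemma splits_geom_sum_X_iff (n : ℕ) :
    (∑ i ∈ Finset.range n, X ^ i : K[X]).Splits ↔ (X ^ n - 1 : K[X]).Splits := by
  rw [← geom_sum_mul, mul_comm, ← splits_X_sub_C_mul_iff (a := 1), map_one]

lemma splits_pow_iff {f : K[X]} {n : ℕ} (hn : n ≠ 0) : (f ^ n).Splits ↔ f.Splits := by
  refine ⟨fun h ↦ ?_, fun h ↦ h.pow n⟩
  rcases eq_or_ne f 0 with rfl | hf
  · exact Splits.zero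
  exact h.of_dvd (pow_ne_zero n hf) (dvd_pow_self f hn)

lemma splits_X_pow_mul_pow_char_sub_one_iff (p : ℕ) [Fact p.Prime] [CharP K p] (m n : ℕ) :
    (X ^ (m * p ^ n) - 1 : K[X]).Splits ↔ (X ^ m - 1 : K[X]).Splits := by
  have hfrob : (X ^ (m * p ^ n) - 1 : K[X]) = (X ^ m - 1) ^ p ^ n := by
    rw [sub_pow_char_pow, one_pow, pow_mul]
  rw [hfrob, splits_pow_iff (pow_ne_zero n (Fact.out : p.Prime).ne_zero)]

lemma natCard_rootsOfUnity_of_splits {m : ℕ} [NeZero m] (hm : (m : K) ≠ 0)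
    (hs : (X ^ m - 1 : K[X]).Splits) : Nat.card (rootsOfUnity m K) = m := by
  classical
  have hnodup : (nthRoots m (1 : K)).Nodup :=
    nodup_roots (by simpa using X_pow_sub_one_separable_iff.mpr hm)
  have hroots : Multiset.card (nthRoots m (1 : K)) = m := by
    rw [nthRoots, map_one, splits_iff_card_roots.mp hs, ← C_1, natDegree_X_pow_sub_C]
  calc Nat.card (rootsOfUnity m K)
      = Nat.card {x // x ∈ nthRoots m (1 : K)} := Nat.card_congr (rootsOfUnityEquivNthRoots K m)
    _ = (nthRoots m (1 : K)).toFinset.card := by rw [← Nat.card_eq_finsetCard]; simp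
    _ = m := by rw [Multiset.toFinset_card_of_nodup hnodup, hroots]

variable [Finite K]

lemma splits_X_pow_sub_one_iff_dvd_card_sub_one {m : ℕ} (hm : (m : K) ≠ 0) :
    (X ^ m - 1 : K[X]).Splits ↔ m ∣ Nat.card K - 1 := by
  have : NeZero m := ⟨by rintro rfl; simp at hm⟩
  constructor
  · intro hs
    rw [← natCard_rootsOfUnity_of_splits hm hs, ← Nat.card_units]
    exact Subgroup.card_subgroup_dvd_card _
  · intro hdvd
    obtain ⟨g, hg⟩ := IsCyclic.exists_ofOrder_eq_natCard (α := Kˣ)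
    rw [← Nat.card_units, ← hg] at hdvd
    have hg0 : orderOf g ≠ 0 := (orderOf_pos g).ne'
    have hζ := (IsPrimitiveRoot.orderOf g).pow_of_dvd
      (Nat.div_ne_zero_iff_of_dvd hdvd |>.mpr ⟨hg0, NeZero.ne m⟩) (Nat.div_dvd_of_dvd hdvd)
    rw [Nat.div_div_self hdvd hg0] at hζ
    simpa using X_pow_sub_one_splits (IsPrimitiveRoot.coe_units_iff.mpr hζ)

end Splitting

lemma natCard_F4 : Nat.card F4 = 4 := GaloisField.card 2 2 two_ne_zero

lemma splits_X_pow_mul_two_pow_sub_one_F4_iff {m : ℕ} (hm : Odd m) (n : ℕ) :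
    (X ^ (m * 2 ^ n) - 1 : F4[X]).Splits ↔ m ∣ 3 := by
  have hm0 : (m : F4) ≠ 0 := by
    rwa [Ne, CharP.cast_eq_zero_iff F4 2, ← even_iff_two_dvd, Nat.not_even_iff_odd]
  rw [splits_X_pow_mul_pow_char_sub_one_iff 2, splits_X_pow_sub_one_iff_dvd_card_sub_one hm0,
    natCard_F4]

theorem stmt5 (k : ℕ) :
    (sigmaStarStar (X ^ (2 * k + 1) : Polynomial F4)).Splits ↔
      ∃ N ∈ ({1, 3} : Set ℕ), ∃ n : ℕ, 2 * k + 1 = N * 2 ^ n - 1 := by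
  rw [sigmaStarStar_X_pow (odd_two_mul_add_one k), splits_geom_sum_X_iff]
  constructor
  · obtain ⟨n, m, hm, hmn⟩ := Nat.exists_eq_two_pow_mul_odd (n := 2 * k + 1 + 1) (by omega)
    rw [hmn, mul_comm (2 ^ n), splits_X_pow_mul_two_pow_sub_one_F4_iff hm]
    intro hm3
    exact ⟨m, (Nat.dvd_prime Nat.prime_three).mp hm3, n, by rw [mul_comm m]; omega⟩
  · rintro ⟨N, hN, n, hk⟩
    rw [show 2 * k + 1 + 1 = N * 2 ^ n by omega]
    rcases hN with rfl | rfl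
    · exact (splits_X_pow_mul_two_pow_sub_one_F4_iff odd_one n).mpr (one_dvd 3)
    · exact (splits_X_pow_mul_two_pow_sub_one_F4_iff (by decide) n).mpr dvd_rfl
end

section
/- Let p be an odd prime. Then Ω₂ = {p}, Ω₃ = {p−1}, and Ω₄ = {p²−1}. -/
/-- `Ω₁ = {N ∈ ℕ* : N ∣ p²-1 and 2N+2 ∣ p²-1}`. -/
def Omega1 (p : ℕ) : Set ℕ := {N | 0 < N ∧ N ∣ (p ^ 2 - 1) ∧ (2 * N + 2) ∣ (p ^ 2 - 1)}

/-- `Ω₂ = {pN : N ∈ ℕ*, N ∣ p²-1 and 2pN+2 ∣ p²-1}`. -/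
def Omega2 (p : ℕ) : Set ℕ :=
  {m | ∃ N : ℕ, 0 < N ∧ m = p * N ∧ N ∣ (p ^ 2 - 1) ∧ (2 * p * N + 2) ∣ (p ^ 2 - 1)}

/-- `Ω₃ = {N ∈ ℕ* : N ∣ p²-1, 2N+2 = M·p with M ∣ p²-1}`. -/
def Omega3 (p : ℕ) : Set ℕ :=
  {N | 0 < N ∧ N ∣ (p ^ 2 - 1) ∧ ∃ M : ℕ, M ∣ (p ^ 2 - 1) ∧ 2 * N + 2 = M * p}

/-- `Ω₄ = {N ∈ ℕ* : N ∣ p²-1, 2N+2 = M·p² with M ∣ p²-1}`. -/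
def Omega4 (p : ℕ) : Set ℕ :=
  {N | 0 < N ∧ N ∣ (p ^ 2 - 1) ∧ ∃ M : ℕ, M ∣ (p ^ 2 - 1) ∧ 2 * N + 2 = M * p ^ 2}

/-- `Ω = Ω₁ ∪ Ω₂ ∪ Ω₃ ∪ Ω₄`. -/
def OmegaSet (p : ℕ) : Set ℕ := Omega1 p ∪ Omega2 p ∪ Omega3 p ∪ Omega4 p

private lemma keyDvd (m a p : ℕ) (h1 : (m : ℤ) ∣ (p : ℤ) ^ 2 - 1)
    (h2 : (m : ℤ) ∣ (a : ℤ) ^ 2 * (p : ℤ) ^ 2 - 1) : (m : ℤ) ∣ (a : ℤ) ^ 2 - 1 := by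
  have h3 : (a : ℤ) ^ 2 - 1
      = ((a : ℤ) ^ 2 * (p : ℤ) ^ 2 - 1) - (a : ℤ) ^ 2 * ((p : ℤ) ^ 2 - 1) := by ring
  rw [h3]
  exact dvd_sub h2 (h1.mul_left _)

theorem stmt10 (p : ℕ) (hp : p.Prime) (hodd : Odd p) :
    Omega2 p = {p} ∧ Omega3 p = {p - 1} ∧ Omega4 p = {p ^ 2 - 1} := by
  obtain ⟨t, ht⟩ := hodd
  have h3 : 3 ≤ p := by
    rcases hp.two_le.lt_or_eq with h | h
    · omega
    · omega
  have hsq : p ^ 2 = 4 * t ^ 2 + 4 * t + 1 := by rw [ht]; ring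
  have h1p2 : 1 ≤ p ^ 2 := by nlinarith
  have hqpos : 0 < p ^ 2 - 1 := Nat.sub_pos_of_lt (by nlinarith)
  have hq1 : p ^ 2 - 1 + 1 = p ^ 2 := Nat.sub_add_cancel h1p2
  have hq' : p ^ 2 - 1 = 4 * t ^ 2 + 4 * t := by rw [hsq]; simp
  have hqZ : ((p ^ 2 - 1 : ℕ) : ℤ) = (p : ℤ) ^ 2 - 1 := by
    have h : ((p ^ 2 - 1 : ℕ) : ℤ) + 1 = ((p : ℤ)) ^ 2 := by exact_mod_cast hq1
    linarith
  have hnd2p : ¬ (2 ∣ p) := by omega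
  refine ⟨?_, ?_, ?_⟩
  · -- Omega2 = {p}
    ext x
    simp only [Omega2, Set.mem_setOf_eq, Set.mem_singleton_iff]
    constructor
    · rintro ⟨N, hN, rfl, hNd, hdvd⟩
      have hle : 2 * p * N + 2 ≤ p ^ 2 - 1 := Nat.le_of_dvd hqpos hdvd
      have hle'' : 2 * p * N + 2 ≤ p ^ 2 := le_trans hle (Nat.sub_le _ _)
      have hNp : N < p := by
        by_contra h
        push_neg at h
        nlinarith
      have hm : p * N + 1 ∣ p ^ 2 - 1 := dvd_trans ⟨2, by ring⟩ hdvd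
      have hmZ : ((p * N + 1 : ℕ) : ℤ) ∣ (p : ℤ) ^ 2 - 1 := by
        rw [← hqZ]; exact_mod_cast hm
      have h2 : ((p * N + 1 : ℕ) : ℤ) ∣ (N : ℤ) ^ 2 * (p : ℤ) ^ 2 - 1 := by
        refine ⟨(p : ℤ) * N - 1, ?_⟩
        push_cast
        ring
      have hkey := keyDvd (p * N + 1) N p hmZ h2
      have hkeyN : p * N + 1 ∣ N ^ 2 - 1 := by
        have hc : ((N ^ 2 - 1 : ℕ) : ℤ) = (N : ℤ) ^ 2 - 1 := by
          push_cast [Nat.cast_sub (Nat.one_le_pow 2 N hN)]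
          ring
        rw [← hc] at hkey
        exact_mod_cast hkey
      have hmul : N ^ 2 ≤ p * N := by nlinarith
      have hlt : N ^ 2 - 1 < p * N + 1 :=
        lt_of_le_of_lt (le_trans (Nat.sub_le _ _) hmul) (Nat.lt_succ_self _)
      have h0 : N ^ 2 - 1 = 0 := Nat.eq_zero_of_dvd_of_lt hkeyN hlt
      have hNle1 : N ≤ 1 :=
        le_trans (Nat.le_self_pow two_ne_zero N) (Nat.le_of_sub_eq_zero h0)
      have hN1 : N = 1 := le_antisymm hNle1 hN
      rw [hN1, mul_one]
    · intro hx
      refine ⟨1, one_pos, by rw [hx, mul_one], one_dvd _, ⟨t, ?_⟩⟩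
      rw [hq', ht]
      ring
  · -- Omega3 = {p-1}
    ext N
    simp only [Omega3, Set.mem_setOf_eq, Set.mem_singleton_iff]
    constructor
    · rintro ⟨hN, hNd, M, hMd, heq⟩
      have h2M : 2 ∣ M := by
        have h2d : 2 ∣ M * p := ⟨N + 1, by linarith [heq]⟩
        rcases (Nat.prime_two.dvd_mul.mp h2d) with h | h
        · exact h
        · exact absurd h hnd2p
      obtain ⟨k, rfl⟩ := h2M
      have hN1 : N + 1 = k * p := by
        have h2' : 2 * (N + 1) = 2 * (k * p) := by linarith [heq]
        exact Nat.eq_of_mul_eq_mul_left (by norm_num) h2'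
      have hk1 : 0 < k := by
        rcases Nat.eq_zero_or_pos k with rfl | h
        · rw [zero_mul] at hN1; omega
        · exact h
      have hNle : N ≤ p ^ 2 - 1 := Nat.le_of_dvd hqpos hNd
      have hNle' : N + 1 ≤ p ^ 2 := by
        have h := Nat.add_le_add_right hNle 1
        rwa [hq1] at h
      have hkp : k ≤ p := by
        by_contra h
        push_neg at h
        nlinarith
      have hkne : k ≠ p := by
        intro he
        have hpd : p ∣ p ^ 2 - 1 := dvd_trans ⟨2, by rw [he]; ring⟩ hMd
        have h1 : p ∣ p ^ 2 := dvd_pow_self p two_ne_zero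
        have h2 : p ∣ p ^ 2 - (p ^ 2 - 1) := Nat.dvd_sub h1 hpd
        rw [Nat.sub_sub_self h1p2] at h2
        have := Nat.le_of_dvd one_pos h2
        omega
      have hklt : k < p := lt_of_le_of_ne hkp hkne
      have hNZ : (N : ℤ) = (k : ℤ) * p - 1 := by
        have h : ((N : ℤ)) + 1 = (k : ℤ) * p := by exact_mod_cast hN1
        linarith
      have hmZ : ((N : ℕ) : ℤ) ∣ (p : ℤ) ^ 2 - 1 := by
        rw [← hqZ]; exact_mod_cast hNd
      have h2 : ((N : ℕ) : ℤ) ∣ (k : ℤ) ^ 2 * (p : ℤ) ^ 2 - 1 := by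
        refine ⟨(k : ℤ) * p + 1, ?_⟩
        rw [hNZ]
        ring
      have hkey := keyDvd N k p hmZ h2
      have hkeyN : N ∣ k ^ 2 - 1 := by
        have hc : ((k ^ 2 - 1 : ℕ) : ℤ) = (k : ℤ) ^ 2 - 1 := by
          push_cast [Nat.cast_sub (Nat.one_le_pow 2 k hk1)]
          ring
        rw [← hc] at hkey
        exact_mod_cast hkey
      have hm2 : k ^ 2 < k * p := by nlinarith
      rw [← hN1] at hm2
      have hk2N : k ^ 2 ≤ N := Nat.lt_succ_iff.mp hm2
      have hlt : k ^ 2 - 1 < N :=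
        lt_of_le_of_lt (Nat.sub_le_sub_right hk2N 1) (Nat.sub_lt hN one_pos)
      have h0 : k ^ 2 - 1 = 0 := Nat.eq_zero_of_dvd_of_lt hkeyN hlt
      have hkle1 : k ≤ 1 :=
        le_trans (Nat.le_self_pow two_ne_zero k) (Nat.le_of_sub_eq_zero h0)
      have hkeq : k = 1 := le_antisymm hkle1 hk1
      rw [hkeq, one_mul] at hN1
      omega
    · intro hx
      subst hx
      have hpm1 : p - 1 = 2 * t := by omega
      refine ⟨by omega, ⟨p + 1, ?_⟩, 2, ⟨2 * t ^ 2 + 2 * t, by rw [hq']; ring⟩, by omega⟩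
      rw [hq', hpm1, ht]
      ring
  · -- Omega4 = {p^2-1}
    ext N
    simp only [Omega4, Set.mem_setOf_eq, Set.mem_singleton_iff]
    constructor
    · rintro ⟨hN, hNd, M, hMd, heq⟩
      have hnd2p2 : ¬ (2 ∣ p ^ 2) := fun h =>
        hnd2p (Nat.Prime.dvd_of_dvd_pow Nat.prime_two h)
      have h2M : 2 ∣ M := by
        have h2d : 2 ∣ M * p ^ 2 := ⟨N + 1, by linarith [heq]⟩
        rcases (Nat.prime_two.dvd_mul.mp h2d) with h | h
        · exact h
        · exact absurd h hnd2p2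
      obtain ⟨k, rfl⟩ := h2M
      have hN1 : N + 1 = k * p ^ 2 := by
        have h2' : 2 * (N + 1) = 2 * (k * p ^ 2) := by linarith [heq]
        exact Nat.eq_of_mul_eq_mul_left (by norm_num) h2'
      have hk1 : 0 < k := by
        rcases Nat.eq_zero_or_pos k with rfl | h
        · rw [zero_mul] at hN1; omega
        · exact h
      have hNle : N ≤ p ^ 2 - 1 := Nat.le_of_dvd hqpos hNd
      have hNle' : N + 1 ≤ p ^ 2 := by
        have h := Nat.add_le_add_right hNle 1
        rwa [hq1] at h
      have hkle : k ≤ 1 := by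
        have h : k * p ^ 2 ≤ 1 * p ^ 2 := by rw [one_mul, ← hN1]; exact hNle'
        exact Nat.le_of_mul_le_mul_right h (by positivity)
      have hkeq : k = 1 := le_antisymm hkle hk1
      rw [hkeq, one_mul] at hN1
      exact Nat.eq_sub_of_add_eq hN1
    · intro hx
      subst hx
      refine ⟨hqpos, dvd_refl _, 2, ⟨2 * t ^ 2 + 2 * t, by rw [hq']; ring⟩, ?_⟩
      rw [show 2 * (p ^ 2 - 1) + 2 = 2 * ((p ^ 2 - 1) + 1) from by ring, hq1]
end

section
/- Let A ∈ F_4[x] be bi-unitary perfect and splitting (a product of linear factors) with exactly two distinct monic irreducible factors (ω(A) = 2). Then A ∈ Σ, i.e., A = (x^2+x)^r or A = (x^2+x+1)^r with r = 2 or r = 2^n − 1 for some n ≥ 1. Conversely, every element of Σ is bi-unitary perfect over F_4. -/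
open Polynomial

variable {F : Type*} [Field F]

/-- `ω(S)`: the number of distinct monic irreducible factors of `S`. -/
noncomputable def omegaCount (S : Polynomial F) : ℕ :=
  {P : Polynomial F | P.Monic ∧ Irreducible P ∧ P ∣ S}.ncard

/-- The exponent set `𝒯 = {2} ∪ {2^n - 1 : n ≥ 1}`. -/
def TSet : Set ℕ := {r | 0 < r ∧ (r = 2 ∨ ∃ n : ℕ, 1 ≤ n ∧ r = 2 ^ n - 1)}

/-- The set `Σ = {(x²+x)^r, (x²+x+1)^r : r ∈ 𝒯}`. -/
def SigmaSet : Set (Polynomial F4) :=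
  {A | ∃ r ∈ TSet, A = (X ^ 2 + X) ^ r ∨ A = (X ^ 2 + X + 1) ^ r}

/-!
For coprime prime powers, `σ**` is multiplicative with `σ**(P ^ m) = ∑ P ^ i` over `i ≤ m`,
`2 * i ≠ m`. A split `A` with `ω(A) = 2` is `c (X - a) ^ m (X - b) ^ n`; the sum for `P = X - a`
is monic and prime to `P`, so `σ**(A) = A` forces `c = 1`, `m = n` and
`∑ (X - a) ^ i = (X - b) ^ m`. Shifting by `a` turns this into `∑ X ^ i = (X + a - b) ^ m`. In
characteristic 2 the left side vanishes at `1`, so `b = a + 1`; for even `m` the coefficient of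
`X` forces `m = 2`, and for odd `m` the identity becomes `(X + 1) ^ (m + 1) = X ^ (m + 1) + 1`,
so `m + 1` is a power of `2`. Hence `A = (X ^ 2 + X + a ^ 2 + a) ^ m` with `a ^ 2 + a ∈ {0, 1}`
in `F₄`. Conversely, in characteristic 2 one has `∑_{i < 2 ^ n} P ^ i = (P + 1) ^ (2 ^ n - 1)`.
-/

/-- For `0 < m`, the exponents `i` for which `P ^ i` is a bi-unitary divisor of `P ^ m`. (For
`m = 0` the set is empty, although `1` is a bi-unitary divisor of `1`.) -/
def biunitaryExponents (m : ℕ) : Finset ℕ := (Finset.range (m + 1)).filter (fun i => 2 * i ≠ m)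

theorem mem_biunitaryExponents {i m : ℕ} : i ∈ biunitaryExponents m ↔ i ≤ m ∧ 2 * i ≠ m := by
  simp [biunitaryExponents]

theorem self_mem_biunitaryExponents {m : ℕ} (hm : 0 < m) : m ∈ biunitaryExponents m :=
  mem_biunitaryExponents.mpr ⟨le_rfl, by omega⟩

theorem zero_mem_biunitaryExponents {m : ℕ} (hm : 0 < m) : 0 ∈ biunitaryExponents m :=
  mem_biunitaryExponents.mpr ⟨Nat.zero_le m, by omega⟩

theorem biunitaryExponents_of_odd {m : ℕ} (hm : Odd m) :
    biunitaryExponents m = Finset.range (m + 1) := by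
  obtain ⟨q, rfl⟩ := hm
  ext i
  simp only [mem_biunitaryExponents, Finset.mem_range]
  omega

theorem even_card_biunitaryExponents (m : ℕ) : Even (biunitaryExponents m).card := by
  rcases Nat.even_or_odd m with ⟨q, rfl⟩ | hm
  · have hE : biunitaryExponents (q + q) = (Finset.range (q + q + 1)).erase q := by
      ext i
      simp only [mem_biunitaryExponents, Finset.mem_erase, Finset.mem_range]
      omega
    rw [hE, Finset.card_erase_of_mem (by simp only [Finset.mem_range]; omega),
      Finset.card_range, Nat.add_sub_cancel]
    exact ⟨q, rfl⟩
  · rw [biunitaryExponents_of_odd hm, Finset.card_range]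
    exact hm.add_one

section UnitMultiple

variable {u : F} (hu : u ≠ 0)
include hu

theorem isUnitaryDivisor_C_mul_iff {G S : F[X]} :
    IsUnitaryDivisor G (C u * S) ↔ IsUnitaryDivisor G S := by
  have hunit : IsUnit (C u) := isUnit_C.2 hu.isUnit
  refine and_congr_right fun _ => ?_
  constructor
  · rintro ⟨hdvd, hcop⟩
    have hdvd' := hunit.dvd_mul_left.mp hdvd
    rw [EuclideanDomain.mul_div_assoc _ hdvd', isCoprime_mul_unit_left_right hunit] at hcop
    exact ⟨hdvd', hcop⟩
  · rintro ⟨hdvd, hcop⟩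
    refine ⟨hdvd.mul_left _, ?_⟩
    rwa [EuclideanDomain.mul_div_assoc _ hdvd, isCoprime_mul_unit_left_right hunit]

theorem isBiunitaryDivisor_C_mul_iff {D S : F[X]} :
    IsBiunitaryDivisor D (C u * S) ↔ IsBiunitaryDivisor D S := by
  have hunit : IsUnit (C u) := isUnit_C.2 hu.isUnit
  refine and_congr_right fun _ => ?_
  constructor
  · rintro ⟨hdvd, hG⟩
    have hdvd' := hunit.dvd_mul_left.mp hdvd
    refine ⟨hdvd', fun G hGD hGS => hG G hGD ?_⟩
    rwa [EuclideanDomain.mul_div_assoc _ hdvd', isUnitaryDivisor_C_mul_iff hu]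
  · rintro ⟨hdvd, hG⟩
    refine ⟨hdvd.mul_left _, fun G hGD hGS => hG G hGD ?_⟩
    rwa [EuclideanDomain.mul_div_assoc _ hdvd, isUnitaryDivisor_C_mul_iff hu] at hGS

theorem sigmaStarStar_C_mul (S : F[X]) : sigmaStarStar (C u * S) = sigmaStarStar S := by
  simp only [sigmaStarStar, isBiunitaryDivisor_C_mul_iff hu]

end UnitMultiple

section TwoPrimes

variable {P Q : F[X]}

theorem isCoprime_of_monic_of_irreducible_of_ne (hP : P.Monic) (hQ : Q.Monic)
    (hPi : Irreducible P) (hQi : Irreducible Q) (hne : P ≠ Q) : IsCoprime P Q :=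
  hPi.coprime_iff_not_dvd.mpr fun h =>
    hne (eq_of_monic_of_associated hP hQ (hPi.associated_of_dvd hQi h))

theorem exists_eq_pow_mul_pow_of_dvd (hP : P.Monic) (hQ : Q.Monic) (hPi : Irreducible P)
    (hQi : Irreducible Q) {a b : ℕ} {D : F[X]} (hD : D.Monic) (hdvd : D ∣ P ^ a * Q ^ b) :
    ∃ i ≤ a, ∃ j ≤ b, D = P ^ i * Q ^ j := by
  obtain ⟨D₁, D₂, h₁, h₂, rfl⟩ := exists_dvd_and_dvd_of_dvd_mul hdvd
  obtain ⟨i, hi, hD₁⟩ := (dvd_prime_pow hPi.prime a).mp h₁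
  obtain ⟨j, hj, hD₂⟩ := (dvd_prime_pow hQi.prime b).mp h₂
  exact ⟨i, hi, j, hj,
    eq_of_monic_of_associated hD ((hP.pow i).mul (hQ.pow j)) (hD₁.mul_mul hD₂)⟩

theorem pow_mul_pow_dvd_pow_mul_pow_iff (hPi : Irreducible P) (hQi : Irreducible Q)
    (hPQ : IsCoprime P Q) {i j a b : ℕ} :
    P ^ i * Q ^ j ∣ P ^ a * Q ^ b ↔ i ≤ a ∧ j ≤ b := by
  refine ⟨fun h => ⟨?_, ?_⟩, fun ⟨hi, hj⟩ => mul_dvd_mul (pow_dvd_pow P hi) (pow_dvd_pow Q hj)⟩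
  · have : P ^ i ∣ P ^ a := (hPQ.pow (m := i) (n := b)).dvd_of_dvd_mul_right
      ((dvd_mul_right _ _).trans h)
    exact (pow_dvd_pow_iff hPi.ne_zero hPi.not_isUnit).mp this
  · have : Q ^ j ∣ Q ^ b := (hPQ.symm.pow (m := j) (n := a)).dvd_of_dvd_mul_left
      ((dvd_mul_left _ _).trans h)
    exact (pow_dvd_pow_iff hQi.ne_zero hQi.not_isUnit).mp this

theorem pow_mul_pow_inj (hPi : Irreducible P) (hQi : Irreducible Q) (hPQ : IsCoprime P Q)
    {i j a b : ℕ} : P ^ i * Q ^ j = P ^ a * Q ^ b ↔ i = a ∧ j = b := by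
  refine ⟨fun h => ?_, by rintro ⟨rfl, rfl⟩; rfl⟩
  have h₁ := (pow_mul_pow_dvd_pow_mul_pow_iff hPi hQi hPQ).mp h.dvd
  have h₂ := (pow_mul_pow_dvd_pow_mul_pow_iff hPi hQi hPQ).mp h.symm.dvd
  omega

theorem pow_mul_pow_div_pow_mul_pow (hPi : Irreducible P) (hQi : Irreducible Q)
    {i j a b : ℕ} (hi : i ≤ a) (hj : j ≤ b) :
    P ^ a * Q ^ b / (P ^ i * Q ^ j) = P ^ (a - i) * Q ^ (b - j) := by
  have hfac : P ^ a * Q ^ b = P ^ i * Q ^ j * (P ^ (a - i) * Q ^ (b - j)) := by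
    rw [← pow_sub_mul_pow P hi, ← pow_sub_mul_pow Q hj]; ring
  rw [hfac, mul_div_cancel_left₀ _ (mul_ne_zero (pow_ne_zero _ hPi.ne_zero)
    (pow_ne_zero _ hQi.ne_zero))]

theorem isCoprime_pow_mul_pow_iff (hPi : Irreducible P) (hQi : Irreducible Q)
    (hPQ : IsCoprime P Q) {i j a b : ℕ} :
    IsCoprime (P ^ i * Q ^ j) (P ^ a * Q ^ b) ↔ (i = 0 ∨ a = 0) ∧ (j = 0 ∨ b = 0) := by
  constructor
  · intro h
    refine ⟨?_, ?_⟩ <;> by_contra! hne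
    · exact hPi.not_isUnit (h.isUnit_of_dvd' (dvd_mul_of_dvd_left (dvd_pow_self P hne.1) _)
        (dvd_mul_of_dvd_left (dvd_pow_self P hne.2) _))
    · exact hQi.not_isUnit (h.isUnit_of_dvd' (dvd_mul_of_dvd_right (dvd_pow_self Q hne.1) _)
        (dvd_mul_of_dvd_right (dvd_pow_self Q hne.2) _))
  · rintro ⟨hPpart, hQpart⟩
    have hP' : IsCoprime (P ^ i) (P ^ a) := by
      rcases hPpart with rfl | rfl <;> simp [isCoprime_one_left, isCoprime_one_right]
    have hQ' : IsCoprime (Q ^ j) (Q ^ b) := by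
      rcases hQpart with rfl | rfl <;> simp [isCoprime_one_left, isCoprime_one_right]
    exact (hP'.mul_right hPQ.pow).mul_left (hPQ.symm.pow.mul_right hQ')

theorem isUnitaryDivisor_pow_mul_pow_iff (hP : P.Monic) (hQ : Q.Monic) (hPi : Irreducible P)
    (hQi : Irreducible Q) (hPQ : IsCoprime P Q) {i j a b : ℕ} (hi : i ≤ a) (hj : j ≤ b) :
    IsUnitaryDivisor (P ^ i * Q ^ j) (P ^ a * Q ^ b) ↔ (i = 0 ∨ i = a) ∧ (j = 0 ∨ j = b) := by
  rw [IsUnitaryDivisor, pow_mul_pow_div_pow_mul_pow hPi hQi hi hj,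
    isCoprime_pow_mul_pow_iff hPi hQi hPQ]
  simp only [(hP.pow i).mul (hQ.pow j), mul_dvd_mul (pow_dvd_pow P hi) (pow_dvd_pow Q hj),
    true_and]
  omega

theorem isBiunitaryDivisor_pow_mul_pow_iff (hP : P.Monic) (hQ : Q.Monic) (hPi : Irreducible P)
    (hQi : Irreducible Q) (hPQ : IsCoprime P Q) {i j h k : ℕ} (hh : 0 < h) (hk : 0 < k)
    (hi : i ≤ h) (hj : j ≤ k) :
    IsBiunitaryDivisor (P ^ i * Q ^ j) (P ^ h * Q ^ k) ↔ 2 * i ≠ h ∧ 2 * j ≠ k := by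
  have hunitary {i j a b : ℕ} (hi : i ≤ a) (hj : j ≤ b) :=
    isUnitaryDivisor_pow_mul_pow_iff hP hQ hPi hQi hPQ hi hj
  have hone : (1 : F[X]) = P ^ 0 * Q ^ 0 := by rw [pow_zero, pow_zero, mul_one]
  rw [IsBiunitaryDivisor, pow_mul_pow_div_pow_mul_pow hPi hQi hi hj]
  simp only [(hP.pow i).mul (hQ.pow j), mul_dvd_mul (pow_dvd_pow P hi) (pow_dvd_pow Q hj),
    true_and]
  constructor
  · intro hG
    refine ⟨fun h2i => ?_, fun h2j => ?_⟩
    · have h₁ := hG (P ^ i * Q ^ 0) ((hunitary le_rfl (Nat.zero_le _)).mpr (by omega))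
        ((hunitary (by omega) (Nat.zero_le _)).mpr (by omega))
      have := (pow_mul_pow_inj hPi hQi hPQ).mp (h₁.trans hone)
      omega
    · have h₁ := hG (P ^ 0 * Q ^ j) ((hunitary (Nat.zero_le _) le_rfl).mpr (by omega))
        ((hunitary (Nat.zero_le _) (by omega)).mpr (by omega))
      have := (pow_mul_pow_inj hPi hQi hPQ).mp (h₁.trans hone)
      omega
  · rintro ⟨h2i, h2j⟩ G hGD hGS
    obtain ⟨i', hi', j', hj', rfl⟩ := exists_eq_pow_mul_pow_of_dvd hP hQ hPi hQi hGD.1 hGD.2.1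
    obtain ⟨hi'', hj''⟩ := (pow_mul_pow_dvd_pow_mul_pow_iff hPi hQi hPQ).mp hGS.2.1
    rw [hunitary hi' hj'] at hGD
    rw [hunitary hi'' hj''] at hGS
    obtain ⟨rfl, rfl⟩ : i' = 0 ∧ j' = 0 := by omega
    exact hone.symm

theorem sigmaStarStar_pow_mul_pow (hP : P.Monic) (hQ : Q.Monic) (hPi : Irreducible P)
    (hQi : Irreducible Q) (hne : P ≠ Q) {h k : ℕ} (hh : 0 < h) (hk : 0 < k) :
    sigmaStarStar (P ^ h * Q ^ k) =
      (∑ i ∈ biunitaryExponents h, P ^ i) * ∑ j ∈ biunitaryExponents k, Q ^ j := by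
  classical
  have hPQ := isCoprime_of_monic_of_irreducible_of_ne hP hQ hPi hQi hne
  have hset : {D | IsBiunitaryDivisor D (P ^ h * Q ^ k)} =
      ((biunitaryExponents h ×ˢ biunitaryExponents k).image fun e => P ^ e.1 * Q ^ e.2 :) := by
    ext D
    simp only [Set.mem_ofPred_eq, Finset.coe_image, Finset.coe_product, Set.mem_image,
      Set.mem_prod, Finset.mem_coe, mem_biunitaryExponents, Prod.exists]
    constructor
    · intro hD
      obtain ⟨i, hi, j, hj, rfl⟩ := exists_eq_pow_mul_pow_of_dvd hP hQ hPi hQi hD.1 hD.2.1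
      have := (isBiunitaryDivisor_pow_mul_pow_iff hP hQ hPi hQi hPQ hh hk hi hj).mp hD
      exact ⟨i, j, ⟨⟨hi, this.1⟩, hj, this.2⟩, rfl⟩
    · rintro ⟨i, j, ⟨⟨hi, h2i⟩, hj, h2j⟩, rfl⟩
      exact (isBiunitaryDivisor_pow_mul_pow_iff hP hQ hPi hQi hPQ hh hk hi hj).mpr ⟨h2i, h2j⟩
  rw [sigmaStarStar, hset, finsum_mem_coe_finset, Finset.sum_image, Finset.sum_product,
    Finset.sum_mul_sum]
  rintro ⟨i, j⟩ - ⟨i', j'⟩ - heq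
  simpa using (pow_mul_pow_inj hPi hQi hPQ).mp heq

end TwoPrimes

section PowerSums

variable {P : F[X]} {m : ℕ}

theorem degree_sum_pow_erase_lt (hP : P.Monic) (hdeg : 0 < P.natDegree) :
    (∑ i ∈ (biunitaryExponents m).erase m, P ^ i).degree < (P ^ m).degree := by
  refine (degree_sum_le _ _).trans_lt ((Finset.sup_lt_iff ?_).mpr fun i hi => ?_)
  · exact bot_lt_iff_ne_bot.mpr (degree_ne_bot.mpr (hP.pow m).ne_zero)
  · rw [Finset.mem_erase, mem_biunitaryExponents] at hi
    refine degree_lt_degree ?_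
    rw [hP.natDegree_pow, hP.natDegree_pow]
    exact Nat.mul_lt_mul_of_pos_right (by omega) hdeg

theorem monic_sum_pow_biunitaryExponents (hP : P.Monic) (hdeg : 0 < P.natDegree) (hm : 0 < m) :
    (∑ i ∈ biunitaryExponents m, P ^ i).Monic := by
  rw [← Finset.add_sum_erase _ _ (self_mem_biunitaryExponents hm)]
  exact (hP.pow m).add_of_left (degree_sum_pow_erase_lt hP hdeg)

theorem natDegree_sum_pow_biunitaryExponents (hP : P.Monic) (hdeg : 0 < P.natDegree)
    (hm : 0 < m) : (∑ i ∈ biunitaryExponents m, P ^ i).natDegree = m * P.natDegree := by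
  rw [← Finset.add_sum_erase _ _ (self_mem_biunitaryExponents hm),
    natDegree_add_eq_left_of_degree_lt (degree_sum_pow_erase_lt hP hdeg), hP.natDegree_pow]

theorem not_dvd_sum_pow_biunitaryExponents (hP : ¬IsUnit P) (hm : 0 < m) :
    ¬P ∣ ∑ i ∈ biunitaryExponents m, P ^ i := by
  rw [← Finset.add_sum_erase _ _ (zero_mem_biunitaryExponents hm), pow_zero]
  intro h
  have hrest : P ∣ ∑ i ∈ (biunitaryExponents m).erase 0, P ^ i :=
    Finset.dvd_sum fun i hi => dvd_pow_self P (Finset.ne_of_mem_erase hi)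
  exact hP (isUnit_of_dvd_one ((dvd_add_left hrest).mp h))

end PowerSums

theorem sum_pow_biunitaryExponents_eq_pow {P Q : F[X]} (hP : P.Monic) (hQ : Q.Monic)
    (hPi : Irreducible P) (hQi : Irreducible Q) (hdeg : P.natDegree = Q.natDegree)
    {m n : ℕ} (hm : 0 < m)
    (h : (∑ i ∈ biunitaryExponents m, P ^ i) * (∑ j ∈ biunitaryExponents n, Q ^ j) =
      P ^ m * Q ^ n) :
    m ≤ n ∧ ∑ i ∈ biunitaryExponents m, P ^ i = Q ^ m := by
  have hmonic := monic_sum_pow_biunitaryExponents hP hPi.natDegree_pos hm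
  obtain ⟨i, -, j, hj, hsum⟩ := exists_eq_pow_mul_pow_of_dvd hP hQ hPi hQi hmonic (Dvd.intro _ h)
  obtain rfl : i = 0 := by
    by_contra hi
    exact not_dvd_sum_pow_biunitaryExponents hPi.not_isUnit hm
      (hsum ▸ dvd_mul_of_dvd_left (dvd_pow_self P hi) _)
  rw [pow_zero, one_mul] at hsum
  obtain rfl : j = m := by
    have := congrArg natDegree hsum
    rw [natDegree_sum_pow_biunitaryExponents hP hPi.natDegree_pos hm, hQ.natDegree_pow,
      hdeg] at this
    exact (Nat.eq_of_mul_eq_mul_right hQi.natDegree_pos this).symm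
  exact ⟨hj, hsum⟩

theorem X_sub_C_injective : Function.Injective fun a : F => X - C a :=
  fun _ _ h => C_injective (sub_right_injective h)

theorem omegaCount_zero_ne_two (hF : 2 < Nat.card F) : omegaCount (0 : F[X]) ≠ 2 := by
  intro h
  have hfin : {P : F[X] | P.Monic ∧ Irreducible P ∧ P ∣ 0}.Finite :=
    Set.finite_of_ncard_ne_zero (by rw [← omegaCount, h]; norm_num)
  have := hfin.to_subtype
  have hle := Nat.card_le_card_of_injective
    (fun a : F => (⟨X - C a, monic_X_sub_C a, irreducible_X_sub_C a, dvd_zero _⟩ :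
      {P : F[X] | P.Monic ∧ Irreducible P ∧ P ∣ 0}))
    fun a b hab => X_sub_C_injective (congrArg Subtype.val hab)
  rw [Nat.card_coe_set_eq, ← omegaCount, h] at hle
  omega

section Splitting

variable {A : F[X]}

theorem omegaCount_eq_card_roots_toFinset [DecidableEq F] (hA : A ≠ 0) (hs : A.Splits) :
    omegaCount A = A.roots.toFinset.card := by
  have hset : {P : F[X] | P.Monic ∧ Irreducible P ∧ P ∣ A} =
      (fun a => X - C a) '' A.roots.toFinset := by
    ext P
    simp only [Set.mem_ofPred_eq, Set.mem_image, Finset.mem_coe, Multiset.mem_toFinset,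
      mem_roots hA]
    constructor
    · rintro ⟨hP, hPi, hPA⟩
      have hPeq : P = X - C (-P.coeff 0) := by
        rw [map_neg, sub_neg_eq_add]
        exact hP.eq_X_add_C ((hs.of_dvd hA hPA).natDegree_eq_one_of_irreducible hPi)
      exact ⟨-P.coeff 0, dvd_iff_isRoot.mp (hPeq ▸ hPA), hPeq.symm⟩
    · rintro ⟨a, ha, rfl⟩
      exact ⟨monic_X_sub_C a, irreducible_X_sub_C a, dvd_iff_isRoot.mpr ha⟩
  rw [omegaCount, hset, Set.ncard_image_of_injective _ X_sub_C_injective, Set.ncard_coe_finset]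

theorem eq_C_mul_X_sub_C_pow_mul_X_sub_C_pow [DecidableEq F] (hs : A.Splits) {a b : F} (hab : a ≠ b)
    (hroots : A.roots.toFinset = {a, b}) :
    A = C A.leadingCoeff * ((X - C a) ^ A.roots.count a * (X - C b) ^ A.roots.count b) := by
  conv_lhs => rw [hs.eq_prod_roots]
  rw [Finset.prod_multiset_map_count, hroots, Finset.prod_pair hab]

theorem exists_sum_pow_eq_of_isBUP_of_splits (hA : A ≠ 0) (hBUP : IsBUP A) (hs : A.Splits)
    (hω : omegaCount A = 2) :
    ∃ a b : F, a ≠ b ∧ ∃ m > 0, A = ((X - C a) * (X - C b)) ^ m ∧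
      ∑ i ∈ biunitaryExponents m, (X - C a) ^ i = (X - C b) ^ m := by
  classical
  rw [omegaCount_eq_card_roots_toFinset hA hs, Finset.card_eq_two] at hω
  obtain ⟨a, b, hab, hroots⟩ := hω
  have hcount_pos : ∀ c ∈ ({a, b} : Finset F), 0 < A.roots.count c := fun c hc =>
    Multiset.count_pos.mpr (Multiset.mem_toFinset.mp (hroots ▸ hc))
  have hm := hcount_pos a (Finset.mem_insert_self a {b})
  have hn := hcount_pos b (Finset.mem_insert_of_mem (Finset.mem_singleton_self b))
  have hA' := eq_C_mul_X_sub_C_pow_mul_X_sub_C_pow hs hab hroots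
  generalize A.roots.count a = m at hm hA'
  generalize A.roots.count b = n at hn hA'
  have hσ : (∑ i ∈ biunitaryExponents m, (X - C a) ^ i) *
      (∑ j ∈ biunitaryExponents n, (X - C b) ^ j) =
      C A.leadingCoeff * ((X - C a) ^ m * (X - C b) ^ n) := by
    rw [← sigmaStarStar_pow_mul_pow (monic_X_sub_C a) (monic_X_sub_C b) (irreducible_X_sub_C a)
      (irreducible_X_sub_C b) (X_sub_C_injective.ne hab) hm hn,
      ← sigmaStarStar_C_mul (leadingCoeff_ne_zero.mpr hA), ← hA']
    exact hBUP
  have hlc : A.leadingCoeff = 1 := by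
    have := congrArg leadingCoeff hσ
    rwa [((monic_sum_pow_biunitaryExponents (monic_X_sub_C a) (by simp) hm).mul
      (monic_sum_pow_biunitaryExponents (monic_X_sub_C b) (by simp) hn)).leadingCoeff,
      leadingCoeff_mul, leadingCoeff_C, (((monic_X_sub_C a).pow m).mul
      ((monic_X_sub_C b).pow n)).leadingCoeff, mul_one, eq_comm] at this
  rw [hlc, map_one, one_mul] at hσ hA'
  obtain ⟨hmn, hsum⟩ := sum_pow_biunitaryExponents_eq_pow (monic_X_sub_C a) (monic_X_sub_C b)
    (irreducible_X_sub_C a) (irreducible_X_sub_C b) (by simp) hm hσ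
  obtain ⟨hnm, -⟩ := sum_pow_biunitaryExponents_eq_pow (monic_X_sub_C b) (monic_X_sub_C a)
    (irreducible_X_sub_C b) (irreducible_X_sub_C a) (by simp) hn
    (by rw [mul_comm, hσ, mul_comm])
  obtain rfl : n = m := le_antisymm hnm hmn
  exact ⟨a, b, hab, n, hn, by rw [hA', mul_pow], hsum⟩

end Splitting

section CharTwo

theorem geom_sum_two_pow_of_charTwo {R : Type*} [CommRing R] [IsDomain R] [CharP R 2] {x : R}
    (hx : x + 1 ≠ 0) (n : ℕ) : ∑ i ∈ Finset.range (2 ^ n), x ^ i = (x + 1) ^ (2 ^ n - 1) := by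
  refine mul_right_cancel₀ hx ?_
  have hgeom := geom_sum_mul x (2 ^ n)
  rw [CharTwo.sub_eq_add, CharTwo.sub_eq_add] at hgeom
  rw [← pow_succ, Nat.sub_add_cancel Nat.one_le_two_pow, hgeom, add_pow_char_pow, one_pow]

theorem sum_pow_mul_sum_add_one_pow_of_charTwo {R : Type*} [CommRing R] [IsDomain R]
    [CharP R 2] {x : R} (hx₀ : x ≠ 0) (hx₁ : x + 1 ≠ 0) {r : ℕ} (hr : r ∈ TSet) :
    (∑ i ∈ biunitaryExponents r, x ^ i) * (∑ j ∈ biunitaryExponents r, (x + 1) ^ j) =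
      (x * (x + 1)) ^ r := by
  obtain ⟨-, rfl | ⟨n, hn, rfl⟩⟩ := hr
  · rw [show biunitaryExponents 2 = {0, 2} by decide, Finset.sum_pair (by decide),
      Finset.sum_pair (by decide)]
    linear_combination (x ^ 2 + x + 1) * CharTwo.two_eq_zero (R := R)
  · have hodd : Odd (2 ^ n - 1) := Nat.Even.sub_odd Nat.one_le_two_pow
      ((Nat.even_pow' (by omega)).mpr even_two) odd_one
    have hx₂ : x + 1 + 1 = x := by rw [add_assoc, CharTwo.add_self_eq_zero, add_zero]
    rw [biunitaryExponents_of_odd hodd, Nat.sub_add_cancel Nat.one_le_two_pow,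
      geom_sum_two_pow_of_charTwo hx₁, geom_sum_two_pow_of_charTwo (hx₂.symm ▸ hx₀), hx₂,
      mul_pow, mul_comm]

variable [CharP F 2]

theorem X_sub_C_mul_X_sub_C_add_one (a : F) :
    (X - C a) * (X - C (a + 1)) = X ^ 2 + X + C (a ^ 2 + a) := by
  rw [map_add, map_add, map_one, map_pow]
  linear_combination (-(C a + 1) * X) * CharTwo.two_eq_zero (R := F[X])

theorem eq_two_pow_of_X_add_one_pow_eq {m : ℕ} (hm : 0 < m)
    (h : (X + 1 : F[X]) ^ m = X ^ m + 1) : ∃ n, m = 2 ^ n := by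
  induction m using Nat.strong_induction_on with
  | _ m ih =>
  obtain ⟨q, rfl | rfl⟩ := Nat.even_or_odd' m
  · have hq : (X + 1 : F[X]) ^ q = X ^ q + 1 := by
      apply frobenius_inj F[X] 2
      rw [frobenius_def, frobenius_def, CharTwo.add_sq, one_pow, ← pow_mul, ← pow_mul,
        mul_comm, h]
    obtain ⟨n, rfl⟩ := ih q (by omega) (by omega) hq
    exact ⟨n + 1, by rw [pow_succ']⟩
  · obtain rfl | hq := Nat.eq_zero_or_pos q
    · exact ⟨0, rfl⟩
    -- the coefficient of `X` is `2 * q + 1 = 1` on the left and `0` on the right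
    have h₁ := congrArg (coeff · 1) h
    simp only [coeff_X_add_one_pow, Nat.choose_one_right, coeff_add, coeff_X_pow, coeff_one]
      at h₁
    push_cast at h₁
    rw [CharTwo.two_eq_zero, zero_mul, zero_add, if_neg (by omega), add_zero] at h₁
    exact absurd h₁ one_ne_zero

theorem eq_one_and_mem_TSet_of_sum_X_pow_eq {c : F} {r : ℕ} (hr : 0 < r)
    (h : ∑ i ∈ biunitaryExponents r, (X : F[X]) ^ i = (X + C c) ^ r) : c = 1 ∧ r ∈ TSet := by
  obtain rfl : c = 1 := by
    -- the left side has an even number of terms, so it vanishes at `1`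
    have h₁ := congrArg (eval 1) h
    simp only [eval_finsetSum, eval_pow, eval_add, eval_X, eval_C, one_pow,
      Finset.sum_const, nsmul_eq_mul, mul_one,
      (CharP.cast_eq_zero_iff F 2 _).mpr (even_card_biunitaryExponents r).two_dvd] at h₁
    rw [← CharTwo.neg_eq (1 : F), eq_neg_iff_add_eq_zero, add_comm]
    exact pow_eq_zero_iff hr.ne' |>.mp h₁.symm
  rw [map_one] at h
  refine ⟨rfl, hr, ?_⟩
  obtain ⟨q, rfl | rfl⟩ := Nat.even_or_odd' r
  · -- the coefficient of `X` is `2 * q = 0` on the right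
    left
    have h₁ := congrArg (coeff · 1) h
    simp only [finsetSum_coeff, coeff_X_pow, Finset.sum_ite_eq, mem_biunitaryExponents,
      coeff_X_add_one_pow, Nat.choose_one_right] at h₁
    push_cast at h₁
    by_contra hq
    rw [if_pos ⟨by omega, Ne.symm hq⟩, CharTwo.two_eq_zero, zero_mul] at h₁
    exact one_ne_zero h₁
  · right
    rw [biunitaryExponents_of_odd (odd_two_mul_add_one q)] at h
    have hgeom := geom_sum_mul (X : F[X]) (2 * q + 1 + 1)
    rw [h, CharTwo.sub_eq_add, CharTwo.sub_eq_add, ← pow_succ] at hgeom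
    obtain ⟨n, hn⟩ := eq_two_pow_of_X_add_one_pow_eq (by omega) hgeom
    refine ⟨n, ?_, by omega⟩
    rcases n with _ | n
    · simp at hn
    · omega

theorem sq_add_self_eq_zero_iff {x : F} : x ^ 2 + x = 0 ↔ x = 0 ∨ x = 1 := by
  rw [show x ^ 2 + x = x * (x + 1) by ring, mul_eq_zero, ← CharTwo.sub_eq_add, sub_eq_zero]

theorem isBUP_X_sq_add_X_add_C_pow (a : F) {r : ℕ} (hr : r ∈ TSet) :
    IsBUP ((X ^ 2 + X + C (a ^ 2 + a)) ^ r) := by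
  have hQ : X - C (a + 1) = X - C a + 1 := by
    rw [map_add, map_one, ← sub_sub, CharTwo.sub_eq_add (X - C a)]
  have hne : X - C a ≠ X - C (a + 1) := X_sub_C_injective.ne (by simp)
  rw [IsBUP, ← X_sub_C_mul_X_sub_C_add_one, mul_pow,
    sigmaStarStar_pow_mul_pow (monic_X_sub_C _) (monic_X_sub_C _) (irreducible_X_sub_C _)
      (irreducible_X_sub_C _) hne hr.1 hr.1, hQ,
    sum_pow_mul_sum_add_one_pow_of_charTwo (X_sub_C_ne_zero a) (hQ ▸ X_sub_C_ne_zero _) hr,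
    mul_pow]

theorem exists_eq_X_sq_add_X_add_C_pow_of_isBUP {A : F[X]} (hA : A ≠ 0) (hBUP : IsBUP A)
    (hs : A.Splits) (hω : omegaCount A = 2) :
    ∃ a : F, ∃ r ∈ TSet, A = (X ^ 2 + X + C (a ^ 2 + a)) ^ r := by
  obtain ⟨a, b, -, m, hm, rfl, hsum⟩ := exists_sum_pow_eq_of_isBUP_of_splits hA hBUP hs hω
  have hshift := congrArg (comp · (X + C a)) hsum
  simp only [Polynomial.sum_comp, pow_comp, sub_comp, X_comp, C_comp, add_sub_cancel_right,
    add_sub_assoc, ← map_sub] at hshift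
  obtain ⟨hab, hr⟩ := eq_one_and_mem_TSet_of_sum_X_pow_eq hm hshift
  obtain rfl : b = a + 1 := by linear_combination -hab - CharTwo.two_eq_zero (R := F)
  exact ⟨a, m, hr, by rw [X_sub_C_mul_X_sub_C_add_one]⟩

end CharTwo

namespace F4

theorem card : Nat.card F4 = 4 :=
  GaloisField.card 2 2 two_ne_zero

theorem pow_four (a : F4) : a ^ 4 = a := by
  have := Fintype.ofFinite F4
  simpa [← Nat.card_eq_fintype_card, card] using FiniteField.pow_card a

theorem sq_add_self_eq_zero_or_one (a : F4) : a ^ 2 + a = 0 ∨ a ^ 2 + a = 1 :=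
  sq_add_self_eq_zero_iff.mp
    (by linear_combination pow_four a + (a ^ 3 + a ^ 2 + a) * CharTwo.two_eq_zero (R := F4))

theorem exists_sq_add_self_eq_one : ∃ α : F4, α ^ 2 + α = 1 := by
  by_contra! h
  have hsurj : Function.Surjective fun b : Bool => if b then (1 : F4) else 0 := fun a => by
    rcases sq_add_self_eq_zero_iff.mp ((sq_add_self_eq_zero_or_one a).resolve_right (h a))
      with rfl | rfl
    · exact ⟨false, rfl⟩
    · exact ⟨true, rfl⟩
  have := Nat.card_le_card_of_surjective _ hsurj
  rw [card, Nat.card_eq_fintype_card, Fintype.card_bool] at this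
  omega

end F4

theorem stmt11 :
    (∀ A : Polynomial F4, IsBUP A → (A.map (RingHom.id F4)).Splits → omegaCount A = 2 →
      A ∈ SigmaSet) ∧
    (∀ B : Polynomial F4, B ∈ SigmaSet → IsBUP B) := by
  refine ⟨fun A hBUP hs hω => ?_, fun B hB => ?_⟩
  · rw [map_id] at hs
    have hA : A ≠ 0 := by
      rintro rfl
      exact omegaCount_zero_ne_two (by rw [F4.card]; norm_num) hω
    obtain ⟨a, r, hr, rfl⟩ := exists_eq_X_sq_add_X_add_C_pow_of_isBUP hA hBUP hs hω
    rcases F4.sq_add_self_eq_zero_or_one a with ha | ha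
    · exact ⟨r, hr, Or.inl (by rw [ha, map_zero, add_zero])⟩
    · exact ⟨r, hr, Or.inr (by rw [ha, map_one])⟩
  · obtain ⟨r, hr, rfl | rfl⟩ := hB
    · simpa using isBUP_X_sq_add_X_add_C_pow (0 : F4) hr
    · obtain ⟨α, hα⟩ := F4.exists_sq_add_self_eq_one
      simpa [hα] using isBUP_X_sq_add_X_add_C_pow α hr
end
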